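/- For each integer μ ≥ 1, let v_μ = (−cos(π·2^{-μ}), sin(π·2^{-μ})), and let s_μ = (sin(π·2^{-μ}) − sin(π·2^{-μ-1})) / (cos(π·2^{-μ-1}) − cos(π·2^{-μ})) be the slope of the segment joining v_μ and v_{μ+1}. Then for every μ ≥ 1, one has 2^{μ-3} ≤ s_μ ≤ 2^{μ}. In particular, the slopes of the edges of the lacunary polygon in the second quadrant are positive, bounded away from zero, and grow geometrically in μ. -/

import Mathlib

open Real

/-- The slope `s_μ` of the segment joining the lacunary polygon vertices
`v_μ = (−cos(π 2^{-μ}), sin(π 2^{-μ}))` and `v_{μ+1}`. -/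
noncomputable def edgeSlope (μ : ℕ) : ℝ :=
  (Real.sin (π * 2 ^ (-(μ : ℤ))) - Real.sin (π * 2 ^ (-(μ : ℤ) - 1))) /
    (Real.cos (π * 2 ^ (-(μ : ℤ) - 1)) - Real.cos (π * 2 ^ (-(μ : ℤ))))

/-!
Sum-to-product turns the slope of the chord between the points of the unit circle at angles
`π - a` and `π - b` into `cot ((a + b) / 2)`, so `s_μ = cot x` with `x = 3π / 2^(μ+2)`, and
`2^μ = 3π / (4x)`. For `0 < x ≤ 3π/8`, Jordan's inequality gives `cot x ≤ π / (2x)`, while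
`sin x ≤ x` and `cos x ≥ 1 - x²/2` give `cot x ≥ (1 - x²/2) / x ≥ 3π / (32x)`.
-/

namespace Real

theorem sin_sub_sin_div_cos_sub_cos {a b : ℝ} (h : sin ((a - b) / 2) ≠ 0) :
    (sin a - sin b) / (cos b - cos a) = cot ((a + b) / 2) := by
  rw [sin_sub_sin, cos_sub_cos, cot_eq_cos_div_sin,
    show (b - a) / 2 = -((a - b) / 2) by ring, add_comm b a, sin_neg]
  field_simp

theorem cot_le_pi_div_two_div {x : ℝ} (hx₀ : 0 < x) (hx : x ≤ π / 2) :
    cot x ≤ π / (2 * x) := by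
  have hjordan : 2 / π * x ≤ sin x := mul_le_sin hx₀.le hx
  have hsin : 0 < sin x := lt_of_lt_of_le (by positivity) hjordan
  rw [cot_eq_cos_div_sin, div_le_div_iff₀ hsin (by positivity)]
  calc cos x * (2 * x) ≤ 1 * (2 * x) := by gcongr; exact cos_le_one x
    _ = π * (2 / π * x) := by field_simp
    _ ≤ π * sin x := by gcongr

theorem one_sub_sq_div_two_div_le_cot {x : ℝ} (hx₀ : 0 < x) (hx : x ^ 2 ≤ 2) :
    (1 - x ^ 2 / 2) / x ≤ cot x := by
  have hsin : 0 < sin x :=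
    sin_pos_of_pos_of_lt_pi hx₀ (by nlinarith [pi_gt_three])
  rw [cot_eq_cos_div_sin]
  calc (1 - x ^ 2 / 2) / x ≤ (1 - x ^ 2 / 2) / sin x :=
        div_le_div_of_nonneg_left (by linarith) hsin (sin_le hx₀.le)
    _ ≤ cos x / sin x := by gcongr; exact one_sub_sq_div_two_le_cos

end Real

theorem edgeSlope_eq_cot (μ : ℕ) : edgeSlope μ = cot (3 * π / 2 ^ (μ + 2)) := by
  have ha : π * (2 : ℝ) ^ (-(μ : ℤ)) = π / 2 ^ μ := by
    rw [zpow_neg, zpow_natCast, div_eq_mul_inv]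
  have hb : π * (2 : ℝ) ^ (-(μ : ℤ) - 1) = π / 2 ^ (μ + 1) := by
    rw [zpow_sub₀ two_ne_zero, zpow_neg, zpow_natCast, zpow_one, pow_succ]
    field_simp
  have hsum : (π / 2 ^ μ + π / 2 ^ (μ + 1)) / 2 = 3 * π / 2 ^ (μ + 2) := by
    rw [pow_succ, pow_succ]; field_simp; ring
  have hdiff : (π / 2 ^ μ - π / 2 ^ (μ + 1)) / 2 = π / 2 ^ (μ + 2) := by
    rw [pow_succ, pow_succ]; field_simp; ring
  have hsin : sin (π / 2 ^ (μ + 2)) ≠ 0 := by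
    refine (sin_pos_of_pos_of_lt_pi (by positivity) ?_).ne'
    exact div_lt_self pi_pos (one_lt_pow₀ one_lt_two (by omega))
  unfold edgeSlope
  rw [ha, hb, sin_sub_sin_div_cos_sub_cos (by rwa [hdiff]), hsum]

/-- The slopes of the edges of the lacunary polygon in the second quadrant
satisfy `2^{μ-3} ≤ s_μ ≤ 2^μ` for all `μ ≥ 1`. -/
theorem edgeSlope_bounds (μ : ℕ) (hμ : 1 ≤ μ) :
    (2 : ℝ) ^ ((μ : ℝ) - 3) ≤ edgeSlope μ ∧ edgeSlope μ ≤ (2 : ℝ) ^ (μ : ℝ) := by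
  set x : ℝ := 3 * π / 2 ^ (μ + 2) with hx
  have hx₀ : 0 < x := by positivity
  have hscale : (2 : ℝ) ^ μ * x = 3 * π / 4 := by
    rw [hx, pow_add]; field_simp; norm_num
  have hx_le : x ≤ 3 * π / 8 := by
    have : (2 : ℝ) ≤ 2 ^ μ := le_self_pow₀ one_le_two (by omega)
    nlinarith [pi_pos]
  rw [Real.rpow_sub two_pos, Real.rpow_natCast, show (2 : ℝ) ^ (3 : ℝ) = 8 by norm_num,
    edgeSlope_eq_cot, ← hx]
  have hπ := pi_lt_d2
  constructor
  · refine le_trans ?_ (one_sub_sq_div_two_div_le_cot hx₀ (by nlinarith [pi_pos]))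
    rw [le_div_iff₀ hx₀]
    nlinarith [pi_pos]
  · refine (cot_le_pi_div_two_div hx₀ (by linarith [pi_pos])).trans ?_
    rw [div_le_iff₀ (by positivity)]
    nlinarith [pi_pos]
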